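/- Let G be a surjunctive group and K a field (or more generally, suppose for each finite alphabet injective CA over G are surjective). Let τ, σ : (K^n)^G → (K^n)^G be linear cellular automata (cellular automata whose local defining maps are K-linear) with σ ∘ τ = Id, where K is algebraically closed. Then τ ∘ σ = Id. -/

import Mathlib

/-! A linear cellular automaton with alphabet `K^n` is the action on configurations of an element
of the monoid algebra `Mₙ(K)[G]`, and this action is faithful and multiplicative, so it suffices to
show that `Mₙ(K)[G]` is Dedekind-finite. Over a finite coefficient ring this is surjunctivity: if
`b * a = 1`, the automaton of `a` is injective, hence surjective, hence inverse to that of `b`.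
In general, `a` and `b` have finitely many coefficients, which generate a finitely generated
`ℤ`-algebra `R`. Such an `R` is a Jacobson ring with finite residue fields, so reducing modulo every
maximal ideal puts the entries of `a * b - 1` in the Jacobson radical of `R`, which is the
nilradical, hence zero since `K` is reduced. -/

/-- A cellular automaton over group `G` and alphabet `A`. -/
def IsCellularAutomaton (G : Type) [Group G] (A : Type) (τ : (G → A) → (G → A)) : Prop :=
  ∃ (M : Finset G) (μ : (M → A) → A), ∀ (c : G → A) (g : G),
    τ c g = μ fun m : M => c (g * (m : G))

/-- A group is surjunctive if every injective cellular automaton with finite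
alphabet over it is surjective. -/
def Surjunctive (G : Type) [Group G] : Prop :=
  ∀ (A : Type) [Finite A] (τ : (G → A) → (G → A)),
    IsCellularAutomaton G A τ → Function.Injective τ → Function.Surjective τ

/-- A linear cellular automaton over `G` with alphabet the `K`-vector space
`K^n`: a cellular automaton admitting a finite memory set and a `K`-linear
local defining map. -/
def IsLinearCellularAutomaton (G : Type) [Group G] (K : Type) [Field K] (n : ℕ)
    (τ : (G → (Fin n → K)) → (G → (Fin n → K))) : Prop :=
  ∃ (M : Finset G) (μ : ((M → (Fin n → K)) →ₗ[K] (Fin n → K))),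
    ∀ (c : G → (Fin n → K)) (g : G), τ c g = μ fun m : M => c (g * (m : G))

open Function MonoidAlgebra

instance : IsJacobsonRing ℤ := by
  refine isJacobsonRing_iff_prime_eq.2 fun {P} hP => ?_
  rcases eq_or_ne P ⊥ with rfl | hP0
  · refine le_antisymm (fun x hx => ?_) Ideal.le_jacobson
    rw [Ideal.mem_bot]
    rcases Int.isUnit_iff.1 (Ideal.mem_jacobson_bot.1 hx x) with h | h <;> nlinarith
  · have := IsPrime.to_maximal_ideal hP0
    exact Ideal.jacobson_eq_self_of_isMaximal

theorem finite_of_finiteType_int (F : Type*) [Field F] [Algebra ℤ F] [Algebra.FiniteType ℤ F] :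
    Finite F := by
  obtain rfl : ‹Algebra ℤ F› = Ring.toIntAlgebra F := Subsingleton.elim _ _
  have : Module.Finite ℤ F := finite_of_finite_type_of_isJacobsonRing ℤ F
  have hchar : ringChar F ≠ 0 := fun h =>
    have : CharZero F := (CharP.ringChar_zero_iff_CharZero F).1 h
    Int.not_isField (isField_of_isIntegral_of_isField Int.cast_injective (Field.toIsField F))
  exact Module.finite_of_fg_torsion F fun x =>
    ⟨⟨ringChar F, mem_nonZeroDivisors_of_ne_zero (by exact_mod_cast hchar)⟩, by simp⟩

instance {ι : Type*} {M : ι → Type*} [∀ i, Monoid (M i)] [∀ i, IsDedekindFiniteMonoid (M i)] :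
    IsDedekindFiniteMonoid (∀ i, M i) :=
  ⟨fun h => funext fun i => mul_eq_one_symm (congrFun h i)⟩

instance {ι R : Type*} [Fintype ι] [DecidableEq ι] [Semiring R] :
    FaithfulSMul (Matrix ι ι R) (ι → R) :=
  ⟨Matrix.ext_iff_smul.2⟩

theorem AddMonoid.End.finsetSum_apply {ι M : Type*} [AddCommMonoid M] (s : Finset ι)
    (f : ι → AddMonoid.End M) (x : M) : (∑ i ∈ s, f i) x = ∑ i ∈ s, f i x :=
  AddMonoidHom.finsetSum_apply _ _ _

section Monoid

variable {G : Type*} [Monoid G]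

def rightTranslation (V : Type*) [AddCommMonoid V] : G →* AddMonoid.End (G → V) where
  toFun x := { toFun := fun c g => c (g * x), map_zero' := rfl, map_add' := fun _ _ => rfl }
  map_one' := by ext c g; exact congrArg c (mul_one g)
  map_mul' x y := by ext c g; exact congrArg c (mul_assoc g x y).symm

variable {k : Type*} (V : Type*) [Semiring k] [AddCommMonoid V] [Module k V]

theorem commute_toAddMonoidEnd_rightTranslation (r : k) (x : G) :
    Commute (Module.toAddMonoidEnd k (G → V) r) (rightTranslation V x) := by
  ext; rfl

namespace MonoidAlgebra

noncomputable def toCellularAutomaton : MonoidAlgebra k G →+* AddMonoid.End (G → V) :=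
  liftNCRingHom _ _ (commute_toAddMonoidEnd_rightTranslation V)

theorem coe_toCellularAutomaton_mul (a b : MonoidAlgebra k G) :
    ⇑(toCellularAutomaton V (a * b)) = toCellularAutomaton V a ∘ toCellularAutomaton V b := by
  rw [map_mul, AddMonoid.End.coe_mul]

theorem coe_toCellularAutomaton_one : ⇑(toCellularAutomaton V (1 : MonoidAlgebra k G)) = id := by
  rw [map_one, AddMonoid.End.coe_one]

theorem toCellularAutomaton_single (m : G) (r : k) (c : G → V) (g : G) :
    toCellularAutomaton V (single m r) c g = r • c (g * m) := by
  rw [toCellularAutomaton, liftNCRingHom_single]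
  rfl

theorem toCellularAutomaton_apply (a : MonoidAlgebra k G) (c : G → V) (g : G) :
    toCellularAutomaton V a c g = a.coeff.sum fun m r => r • c (g * m) := by
  conv_lhs => rw [← sum_coeff_single a, map_finsuppSum]
  rw [Finsupp.sum, AddMonoid.End.finsetSum_apply, Finset.sum_apply]
  exact Finset.sum_congr rfl fun m _ => toCellularAutomaton_single V m _ c g

theorem toCellularAutomaton_pi_single_one [DecidableEq G] (a : MonoidAlgebra k G) (m : G)
    (v : V) : toCellularAutomaton V a (Pi.single m v) 1 = a.coeff m • v := by
  simp +contextual [toCellularAutomaton_apply, Pi.single_apply, Finsupp.sum_ite_eq']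

theorem toCellularAutomaton_injective [FaithfulSMul k V] :
    Injective (toCellularAutomaton (G := G) (k := k) V) := by
  classical
  intro a b hab
  refine coeff_injective <| Finsupp.ext fun m => eq_of_smul_eq_smul (α := V) fun v => ?_
  rw [← toCellularAutomaton_pi_single_one, ← toCellularAutomaton_pi_single_one, hab]

end MonoidAlgebra

end Monoid

namespace MonoidAlgebra

section MatrixCoefficients

variable {G ι K : Type*} [Fintype ι] [DecidableEq ι] [Ring K]

def matrixEntries (a : MonoidAlgebra (Matrix ι ι K) G) : Set K :=
  Set.range fun p : a.coeff.support × ι × ι => a.coeff p.1 p.2.1 p.2.2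

theorem coeff_apply_mem_of_matrixEntries_subset {a : MonoidAlgebra (Matrix ι ι K) G}
    {R : Subalgebra ℤ K} (h : matrixEntries a ⊆ R) (g : G) (i j : ι) : a.coeff g i j ∈ R := by
  by_cases hg : g ∈ a.coeff.support
  · exact h ⟨(⟨g, hg⟩, i, j), rfl⟩
  · simp [Finsupp.notMem_support_iff.1 hg, R.zero_mem]

theorem mem_range_mapRingHom_mapMatrix [Monoid G] {R : Type*} [Ring R] (f : R →+* K)
    {a : MonoidAlgebra (Matrix ι ι K) G} (ha : ∀ g i j, a.coeff g i j ∈ f.range) :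
    a ∈ (mapRingHom G (f.mapMatrix : Matrix ι ι R →+* Matrix ι ι K)).range := by
  rw [← sum_coeff_single a, Finsupp.sum]
  refine Subring.sum_mem _ fun g _ => ?_
  choose A hA using ha g
  refine ⟨single g (Matrix.of A), ?_⟩
  rw [mapRingHom_single]
  congr
  ext i j
  exact hA i j

end MatrixCoefficients

variable {G : Type} [Group G]

theorem isCellularAutomaton_toCellularAutomaton {k : Type*} [Semiring k] (V : Type)
    [AddCommMonoid V] [Module k V] (a : MonoidAlgebra k G) :
    IsCellularAutomaton G V (toCellularAutomaton V a) :=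
  ⟨a.coeff.support, fun f => ∑ m ∈ a.coeff.support.attach, a.coeff m • f m, fun c g => by
    rw [toCellularAutomaton_apply, Finsupp.sum,
      ← Finset.sum_attach a.coeff.support fun m => a.coeff m • c (g * m)]⟩

theorem isDedekindFiniteMonoid_of_surjunctive (hG : Surjunctive G) {k : Type*} [Semiring k]
    (V : Type) [AddCommMonoid V] [Module k V] [FaithfulSMul k V] [Finite V] :
    IsDedekindFiniteMonoid (MonoidAlgebra k G) := by
  refine ⟨fun {a b} hab => toCellularAutomaton_injective V ?_⟩
  have hleft : LeftInverse (toCellularAutomaton V a) (toCellularAutomaton V b) :=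
    congrFun (show toCellularAutomaton V a ∘ toCellularAutomaton V b = id by
      rw [← coe_toCellularAutomaton_mul, hab, coe_toCellularAutomaton_one])
  have hsurj := hG V _ (isCellularAutomaton_toCellularAutomaton V b) hleft.injective
  refine DFunLike.coe_injective ?_
  rw [coe_toCellularAutomaton_mul, coe_toCellularAutomaton_one]
  exact funext (hleft.rightInverse_of_surjective hsurj)

variable {ι : Type} [Fintype ι] [DecidableEq ι]

theorem isDedekindFiniteMonoid_matrix_of_jacobson_bot_eq_bot (hG : Surjunctive G) {R : Type}
    [CommRing R] (hR : (⊥ : Ideal R).jacobson = ⊥)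
    (hfin : ∀ I : Ideal R, I.IsMaximal → Finite (R ⧸ I)) :
    IsDedekindFiniteMonoid (MonoidAlgebra (Matrix ι ι R) G) := by
  have (I : {I : Ideal R // I.IsMaximal}) :
      IsDedekindFiniteMonoid (MonoidAlgebra (Matrix ι ι (R ⧸ I.1)) G) :=
    have := hfin I.1 I.2
    isDedekindFiniteMonoid_of_surjunctive hG (ι → R ⧸ I.1)
  refine IsDedekindFiniteMonoid.of_injective
    (RingHom.pi fun I : {I : Ideal R // I.IsMaximal} =>
      mapRingHom G (Ideal.Quotient.mk I.1).mapMatrix)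
    ((injective_iff_map_eq_zero _).2 fun a ha => ?_)
  refine coeff_injective <| Finsupp.ext fun g => Matrix.ext fun i j => ?_
  suffices a.coeff g i j ∈ (⊥ : Ideal R).jacobson by simpa [hR] using this
  refine Ideal.mem_sInf.2 fun I ⟨_, hI⟩ => ?_
  rw [← Ideal.Quotient.eq_zero_iff_mem]
  simpa using congr(($(congrFun ha ⟨I, hI⟩)).coeff g i j)

theorem isDedekindFiniteMonoid_matrix_of_finiteType_int (hG : Surjunctive G) (R : Type)
    [CommRing R] [IsReduced R] [Algebra.FiniteType ℤ R] :
    IsDedekindFiniteMonoid (MonoidAlgebra (Matrix ι ι R) G) := by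
  have : IsJacobsonRing R := isJacobsonRing_of_finiteType (A := ℤ)
  refine isDedekindFiniteMonoid_matrix_of_jacobson_bot_eq_bot hG ?_ fun I _ => ?_
  · rw [← Ideal.radical_eq_jacobson]
    exact nilradical_eq_zero R
  · let := Ideal.Quotient.field I
    exact finite_of_finiteType_int (R ⧸ I)

theorem isDedekindFiniteMonoid_matrix_of_isReduced (hG : Surjunctive G) (K : Type) [CommRing K]
    [IsReduced K] : IsDedekindFiniteMonoid (MonoidAlgebra (Matrix ι ι K) G) := by
  refine ⟨fun {a b} hab => ?_⟩
  let R := Algebra.adjoin ℤ (matrixEntries a ∪ matrixEntries b)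
  have : Algebra.FiniteType ℤ R :=
    .adjoin_of_finite ((Set.finite_range _).union (Set.finite_range _))
  have : IsReduced R := isReduced_of_injective R.val Subtype.val_injective
  have := isDedekindFiniteMonoid_matrix_of_finiteType_int (ι := ι) hG R
  let φ := mapRingHom G ((R.val : R →+* K).mapMatrix : Matrix ι ι R →+* Matrix ι ι K)
  have hφ : Injective φ := map_injective _ (Matrix.map_injective Subtype.val_injective)
  have hsub : matrixEntries a ∪ matrixEntries b ⊆ R := Algebra.subset_adjoin
  obtain ⟨a', ha'⟩ := mem_range_mapRingHom_mapMatrix (a := a) (R.val : R →+* K) fun g i j =>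
    ⟨⟨_, coeff_apply_mem_of_matrixEntries_subset (Set.subset_union_left.trans hsub) g i j⟩, rfl⟩
  obtain ⟨b', hb'⟩ := mem_range_mapRingHom_mapMatrix (a := b) (R.val : R →+* K) fun g i j =>
    ⟨⟨_, coeff_apply_mem_of_matrixEntries_subset (Set.subset_union_right.trans hsub) g i j⟩, rfl⟩
  rw [← ha', ← hb', ← map_mul, ← map_one φ] at hab ⊢
  exact congrArg φ (mul_eq_one_symm (hφ hab))

end MonoidAlgebra

theorem IsLinearCellularAutomaton.exists_eq_toCellularAutomaton {G : Type} [Group G]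
    {K : Type} [Field K] {n : ℕ} {τ : (G → Fin n → K) → G → Fin n → K}
    (hτ : IsLinearCellularAutomaton G K n τ) :
    ∃ a : MonoidAlgebra (Matrix (Fin n) (Fin n) K) G, τ = toCellularAutomaton (Fin n → K) a := by
  classical
  obtain ⟨M, μ, hμ⟩ := hτ
  refine ⟨∑ m : M, single (m : G)
    (LinearMap.toMatrix' (μ ∘ₗ LinearMap.single K (fun _ : M => Fin n → K) m)), ?_⟩
  ext c g : 2
  rw [hμ, map_sum, AddMonoid.End.finsetSum_apply, Finset.sum_apply]
  conv_lhs => rw [← Finset.univ_sum_single fun m : M => c (g * m), map_sum]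
  refine Finset.sum_congr rfl fun m _ => ?_
  rw [toCellularAutomaton_single, Matrix.smul_eq_mulVec, LinearMap.toMatrix'_mulVec]
  rfl

theorem linearCellularAutomaton_directly_finite_general {G : Type} [Group G]
    (hG : Surjunctive G) {K : Type} [Field K] (n : ℕ)
    (τ σ : (G → (Fin n → K)) → (G → (Fin n → K)))
    (hτ : IsLinearCellularAutomaton G K n τ)
    (hσ : IsLinearCellularAutomaton G K n σ)
    (h : σ ∘ τ = id) : τ ∘ σ = id := by
  obtain ⟨a, rfl⟩ := hτ.exists_eq_toCellularAutomaton
  obtain ⟨b, rfl⟩ := hσ.exists_eq_toCellularAutomaton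
  have := isDedekindFiniteMonoid_matrix_of_isReduced (ι := Fin n) hG K
  have hba : b * a = 1 := toCellularAutomaton_injective (Fin n → K) <| DFunLike.coe_injective <| by
    rw [coe_toCellularAutomaton_mul, coe_toCellularAutomaton_one, h]
  rw [← coe_toCellularAutomaton_mul, mul_eq_one_symm hba, coe_toCellularAutomaton_one]

/-- Over a surjunctive group, left invertible linear cellular automata over an
algebraically closed field are invertible: `σ ∘ τ = Id` implies `τ ∘ σ = Id`. -/
theorem linearCellularAutomaton_directly_finite {G : Type} [Group G]
    (hG : Surjunctive G) {K : Type} [Field K] [IsAlgClosed K] (n : ℕ)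
    (τ σ : (G → (Fin n → K)) → (G → (Fin n → K)))
    (hτ : IsLinearCellularAutomaton G K n τ)
    (hσ : IsLinearCellularAutomaton G K n σ)
    (h : σ ∘ τ = id) : τ ∘ σ = id :=
  linearCellularAutomaton_directly_finite_general hG n τ σ hτ hσ h
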